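/- A representable pseudo MV-algebra M with square root r is strict if and only if M has no proper Boolean normal prime ideal (a normal prime ideal P with M/P a Boolean algebra). -/
import Mathlib


/-- A pseudo MV-algebra `(M; ⊕, ⁻, ~, 0, 1)`: `+` plays the role of `⊕`, `lneg` of `⁻`
and `rneg` of `~`; the product is `x ⊙ y = (y⁻ ⊕ x⁻)~`. -/
class PMV (M : Type) extends Add M, Zero M, One M where
  lneg : M → M
  rneg : M → M
  add_assoc' : ∀ x y z : M, x + y + z = x + (y + z)
  add_zero' : ∀ x : M, x + 0 = x
  zero_add' : ∀ x : M, 0 + x = x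
  add_one' : ∀ x : M, x + 1 = 1
  one_add' : ∀ x : M, 1 + x = 1
  lneg_one : lneg 1 = 0
  rneg_one : rneg 1 = 0
  a5 : ∀ x y : M, rneg (lneg x + lneg y) = lneg (rneg x + rneg y)
  a6a : ∀ x y : M, x + rneg (lneg y + lneg (rneg x)) = y + rneg (lneg x + lneg (rneg y))
  a6b : ∀ x y : M, x + rneg (lneg y + lneg (rneg x)) = rneg (lneg (lneg y) + lneg x) + y
  a6c : ∀ x y : M, x + rneg (lneg y + lneg (rneg x)) = rneg (lneg (lneg x) + lneg y) + x
  a7 : ∀ x y : M, rneg (lneg (lneg x + y) + lneg x) = rneg (lneg y + lneg (x + rneg y))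
  a8a : ∀ x : M, rneg (lneg x) = x
  a8b : ∀ x : M, lneg (rneg x) = x

namespace PMV

variable {M : Type} [PMV M]

/-- `x ⊙ y = (y⁻ ⊕ x⁻)~`. -/
def mul (x y : M) : M := rneg (lneg y + lneg x)

/-- The lattice order of a pseudo MV-algebra: `x ≤ y ↔ x⁻ ⊕ y = 1`. -/
def le (x y : M) : Prop := lneg x + y = 1

/-- `x ∨ y = x ⊕ (x~ ⊙ y)`. -/
def sup (x y : M) : M := x + mul (rneg x) y

/-- `x ∧ y = x ⊙ (x⁻ ⊕ y)`. -/
def inf (x y : M) : M := mul x (lneg x + y)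

/-- The distance `d(x,y) = (x ⊙ y⁻) ⊕ (y ⊙ x⁻)`; `x/I = y/I` in `M/I` iff `d(x,y) ∈ I`. -/
def dist (x y : M) : M := mul x (lneg y) + mul y (lneg x)

/-- An ideal of a pseudo MV-algebra. -/
def IsIdeal (I : Set M) : Prop :=
  (0 : M) ∈ I ∧ (∀ x ∈ I, ∀ y ∈ I, x + y ∈ I) ∧ ∀ x y : M, le x y → y ∈ I → x ∈ I

/-- A normal ideal: `x ⊕ I = I ⊕ x` for every `x`. -/
def IsNormal (I : Set M) : Prop :=
  ∀ x : M, {z | ∃ i ∈ I, z = x + i} = {z | ∃ i ∈ I, z = i + x}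

/-- A square root on `M`: `r(x) ⊙ r(x) = x` and `y ⊙ y ≤ x → y ≤ r(x)`. -/
def IsSquareRoot (r : M → M) : Prop :=
  (∀ x : M, mul (r x) (r x) = x) ∧ ∀ x y : M, le (mul y y) x → le y (r x)

end PMV

/-- A homomorphism of pseudo MV-algebras. -/
def IsPMVHom {M N : Type} [PMV M] [PMV N] (f : M → N) : Prop :=
  f 0 = 0 ∧ f 1 = 1 ∧ (∀ x y : M, f (x + y) = f x + f y) ∧
    (∀ x : M, f (PMV.lneg x) = PMV.lneg (f x)) ∧
    ∀ x : M, f (PMV.rneg x) = PMV.rneg (f x)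

namespace PMV

variable {M : Type} [PMV M]

lemma pe2 (y : M) : lneg y + y = 1 := by
  have h := a6b 1 y
  rw [one_add', lneg_one, add_zero', a8a] at h
  exact h.symm

lemma pe1 (x : M) : x + rneg x = 1 := by
  have h := a6a x 1
  rw [one_add', lneg_one, zero_add', a8a] at h
  exact h

lemma plneg_zero : lneg (0 : M) = 1 := by
  have h := pe2 (0 : M); rwa [add_zero'] at h

lemma prneg_zero : rneg (0 : M) = 1 := by
  have h := pe1 (0 : M); rwa [zero_add'] at h

lemma ple_one (x : M) : le x 1 := by
  show lneg x + 1 = 1; rw [add_one']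

lemma peq_one {x : M} (h : le 1 x) : x = 1 := by
  have h' : lneg 1 + x = 1 := h
  rwa [lneg_one, zero_add'] at h'

lemma peq_zero {x : M} (h : le x 0) : x = 0 := by
  have h' : lneg x + 0 = 1 := h
  rw [add_zero'] at h'
  have h2 := congrArg rneg h'
  rwa [a8a, rneg_one] at h2

lemma pantitone_lneg {x y : M} (h : le x y) : le (lneg y) (lneg x) := by
  have h' : lneg x + y = 1 := h
  have h7 := a7 x y
  rw [h', lneg_one, zero_add', a8a] at h7
  have h8 := congrArg lneg h7
  rw [a8b] at h8
  show lneg (lneg y) + lneg x = 1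
  rw [h8, ← add_assoc', pe2, one_add']

lemma plstar1 {x y : M} (h : le x y) : x + mul (rneg x) y = y := by
  have hA : lneg (lneg y) + lneg x = 1 := pantitone_lneg h
  have h6 := a6b x y
  rw [hA, rneg_one, zero_add'] at h6
  exact h6

lemma plstar2 {x y : M} (h : le x y) : mul y (lneg x) + x = y :=
  (a6c x y).symm.trans (plstar1 h)

lemma padd_rneg {x y : M} (h : le x y) : y + rneg x = 1 := by
  rw [← plstar2 h, add_assoc', pe1, add_one']

lemma pantitone_rneg {x y : M} (h : le x y) : le (rneg y) (rneg x) := by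
  show lneg (rneg y) + rneg x = 1
  rw [a8b]
  exact padd_rneg h

lemma ple_add_right (x e : M) : le x (x + e) := by
  show lneg x + (x + e) = 1
  rw [← add_assoc', pe2, one_add']

lemma ple_add_left (e x : M) : le x (e + x) := by
  have h1 : le (rneg (e + x)) (rneg x) := by
    show lneg (rneg (e + x)) + rneg x = 1
    rw [a8b, add_assoc', pe1, add_one']
  have h2 := pantitone_lneg h1
  rw [a8b, a8b] at h2
  exact h2

lemma pm1 (x : M) {y z : M} (h : le y z) : le (x + y) (x + z) := by
  have h1 := plstar1 h
  have h2 := ple_add_right (x + y) (mul (rneg y) z)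
  have h3 : (x + y) + mul (rneg y) z = x + z := by rw [add_assoc', h1]
  rw [h3] at h2
  exact h2

lemma pm2 (x : M) {y z : M} (h : le y z) : le (y + x) (z + x) := by
  have h1 := plstar2 h
  have h2 := ple_add_left (mul z (lneg y)) (y + x)
  have h3 : mul z (lneg y) + (y + x) = z + x := by rw [← add_assoc', h1]
  rw [h3] at h2
  exact h2

lemma ple_trans {x y z : M} (h1 : le x y) (h2 : le y z) : le x z := by
  have h3 := pm1 (lneg x) h2
  have h1' : lneg x + y = 1 := h1
  rw [h1'] at h3
  exact peq_one h3

lemma ple_antisymm {x y : M} (h1 : le x y) (h2 : le y x) : x = y := by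
  have s1 := plstar1 h1
  have s2 := plstar1 h2
  have hc := a6a x y
  exact s2.symm.trans (hc.symm.trans s1)

lemma pmul_mono_l (c : M) {a b : M} (h : le a b) : le (mul a c) (mul b c) := by
  have h1 := pantitone_lneg h
  have h2 := pm1 (lneg c) h1
  exact pantitone_rneg h2

lemma pmul_mono_r (a : M) {c d : M} (h : le c d) : le (mul a c) (mul a d) := by
  have h1 := pantitone_lneg h
  have h2 := pm2 (lneg a) h1
  exact pantitone_rneg h2

lemma pmul_one (x : M) : mul x 1 = x := by
  show rneg (lneg 1 + lneg x) = x
  rw [lneg_one, zero_add', a8a]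

lemma pone_mul (x : M) : mul 1 x = x := by
  show rneg (lneg x + lneg 1) = x
  rw [lneg_one, add_zero', a8a]

lemma pmul_lneg (x : M) : mul x (lneg x) = 0 := by
  show rneg (lneg (lneg x) + lneg x) = 0
  rw [pe2, rneg_one]

lemma pmul_rneg (x : M) : mul (rneg x) x = 0 := by
  show rneg (lneg x + lneg (rneg x)) = 0
  rw [a8b, pe2, rneg_one]

lemma pinf_a7 (x y : M) : inf x y = mul (x + rneg y) y := a7 x y

lemma pinf_le_left (x y : M) : le (inf x y) x := by
  have h1 := pmul_mono_r x (ple_one (lneg x + y))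
  rw [pmul_one] at h1
  exact h1

lemma pinf_le_right (x y : M) : le (inf x y) y := by
  have h1 := pmul_mono_l y (ple_one (x + rneg y))
  rw [pone_mul] at h1
  rw [pinf_a7]
  exact h1

lemma pinf_of_le {x y : M} (h : le x y) : inf x y = x := by
  have h' : lneg x + y = 1 := h
  show mul x (lneg x + y) = x
  rw [h', pmul_one]

lemma pinf_of_ge {x y : M} (h : le y x) : inf x y = y := by
  have h' : x + rneg y = 1 := padd_rneg h
  rw [pinf_a7, h', pone_mul]

lemma ple_root {r : M → M} (hr : IsSquareRoot r) (x : M) : le (inf x (lneg x)) (r 0) := by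
  have h1 := pmul_mono_l (inf x (lneg x)) (pinf_le_left x (lneg x))
  have h2 := pmul_mono_r x (pinf_le_right x (lneg x))
  have h3 := ple_trans h1 h2
  rw [pmul_lneg] at h3
  exact hr.2 0 (inf x (lneg x)) h3

lemma phalving {r : M → M} (hr : IsSquareRoot r) (m : M) :
    lneg (r (rneg m)) + lneg (r (rneg m)) = m := by
  have h : rneg (lneg (r (rneg m)) + lneg (r (rneg m))) = rneg m := hr.1 (rneg m)
  have h2 := congrArg lneg h
  rwa [a8b, a8b] at h2

lemma phom_mul {N : Type} [PMV N] {g : M → N} (hg : IsPMVHom g) (a b : M) :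
    g (mul a b) = mul (g a) (g b) := by
  show g (rneg (lneg b + lneg a)) = rneg (lneg (g b) + lneg (g a))
  rw [hg.2.2.2.2, hg.2.2.1, hg.2.2.2.1, hg.2.2.2.1]

lemma phom_inf {N : Type} [PMV N] {g : M → N} (hg : IsPMVHom g) (a b : M) :
    g (inf a b) = inf (g a) (g b) := by
  show g (mul a (lneg a + b)) = mul (g a) (lneg (g a) + g b)
  rw [phom_mul hg, hg.2.2.1, hg.2.2.2.1]

lemma phom_le {N : Type} [PMV N] {g : M → N} (hg : IsPMVHom g) {a b : M} (h : le a b) :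
    le (g a) (g b) := by
  show lneg (g a) + g b = 1
  rw [← hg.2.2.2.1, ← hg.2.2.1, show lneg a + b = 1 from h, hg.2.1]

/-- The key chain argument: in a linearly ordered pseudo MV-algebra in which every
element is a sum `c ⊕ c`, in which `τ ⊙ τ = 0` and `a ∧ a⁻ ≤ τ` for every `a`, if
`τ ≠ τ⁻` then `τ = 0`. -/
lemma pchain_main {L : Type} [PMV L] (htot : ∀ a b : L, le a b ∨ le b a)
    (τ : L) (hτ : mul τ τ = 0) (hii : ∀ a : L, le (inf a (lneg a)) τ)
    (hhalf : ∀ a : L, ∃ c, c + c = a) (hneq : τ ≠ lneg τ) : τ = 0 := by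
  have hB : le τ (lneg τ) := by
    show lneg τ + lneg τ = 1
    have h : rneg (lneg τ + lneg τ) = 0 := hτ
    have h2 := congrArg lneg h
    rwa [a8b, plneg_zero] at h2
  have hD : τ + τ ≠ 1 := by
    intro h1
    apply hneq
    apply ple_antisymm hB
    have h2 : le (rneg τ) τ := by
      show lneg (rneg τ) + τ = 1
      rw [a8b]; exact h1
    have h3 := pantitone_lneg h2
    rwa [a8b] at h3
  have hstepA : ∀ x : L, le x (τ + τ) ∨ x = 1 := by
    intro x
    obtain ⟨c, hc⟩ := hhalf x
    rcases htot c (lneg c) with hcl | hlc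
    · left
      have hct : le c τ := by
        have h := hii c
        rwa [pinf_of_le hcl] at h
      have h1 := pm1 c hct
      have h2 := pm2 τ hct
      have h3 := ple_trans h1 h2
      rwa [hc] at h3
    · right
      have h1 := pm2 c hlc
      rw [pe2, hc] at h1
      exact peq_one h1
  obtain ⟨c, hc⟩ := hhalf (lneg (τ + τ))
  have hrδ : rneg (lneg (τ + τ)) = τ + τ := a8a _
  rcases htot c (lneg c) with hcl | hlc
  · exfalso
    apply hD
    have hct : le c τ := by
      have h := hii c
      rwa [pinf_of_le hcl] at h
    rcases hstepA (rneg c) with h1 | h1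
    · have h2 : le (rneg c) (rneg (lneg (τ + τ))) := by rwa [hrδ]
      have h3 := pantitone_lneg h2
      rw [a8b, a8b] at h3
      have h4 := pm2 (lneg (τ + τ)) h3
      have h5 := pm1 c h3
      have h6 := ple_trans h4 h5
      rw [hc] at h6
      have hidem := (ple_antisymm (ple_add_right (lneg (τ + τ)) (lneg (τ + τ))) h6).symm
      have h8 : le (lneg (τ + τ)) (rneg (lneg (τ + τ))) := by
        rw [hrδ]
        exact ple_trans (ple_trans h3 hct) (ple_add_right τ τ)
      have h10 := pantitone_lneg h8
      rw [a8b] at h10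
      have h11 := pinf_of_le h10
      have h12 : inf (lneg (τ + τ)) (lneg (lneg (τ + τ))) = 0 := by
        rw [pinf_a7, a8a, hidem]
        exact pmul_lneg (lneg (τ + τ))
      have h13 : lneg (τ + τ) = 0 := h11.symm.trans h12
      rw [← hrδ, h13, prneg_zero]
    · have hc0 : c = 0 := by
        have h2 := (a8b c).symm
        rwa [h1, lneg_one] at h2
      have h3 : lneg (τ + τ) = 0 := by rw [← hc, hc0, add_zero']
      rw [← hrδ, h3, prneg_zero]
  · have h1 := pm2 c hlc
    rw [pe2, hc] at h1
    have h2 : lneg (τ + τ) = 1 := peq_one h1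
    have h3 : τ + τ = 0 := by rw [← hrδ, h2, rneg_one]
    have h4 := ple_add_right τ τ
    rw [h3] at h4
    exact peq_zero h4

/-- If strictness fails at a surjective homomorphic image onto a chain, then the kernel
of that homomorphism is a proper Boolean normal prime ideal. -/
lemma pmain_aux {M N : Type} [PMV M] [PMV N]
    (htot : ∀ a b : N, le a b ∨ le b a)
    (g : M → N) (hg : IsPMVHom g) (hsurj : Function.Surjective g)
    (r : M → M) (hr : IsSquareRoot r)
    (hneq : g (r 0) ≠ lneg (g (r 0))) :
    ∃ P : Set M, P ≠ Set.univ ∧ IsIdeal P ∧ IsNormal P ∧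
      (∀ x y : M, inf x y ∈ P → x ∈ P ∨ y ∈ P) ∧
      ∀ x : M, inf x (lneg x) ∈ P := by
  have hτ : mul (g (r 0)) (g (r 0)) = 0 := by
    rw [← phom_mul hg, hr.1, hg.1]
  have hii : ∀ a : N, le (inf a (lneg a)) (g (r 0)) := by
    intro a
    obtain ⟨x, rfl⟩ := hsurj a
    have h1 := phom_le hg (ple_root hr x)
    rwa [phom_inf hg, hg.2.2.2.1] at h1
  have hhalf : ∀ a : N, ∃ c, c + c = a := by
    intro a
    obtain ⟨x, rfl⟩ := hsurj a
    exact ⟨g (lneg (r (rneg x))), by rw [← hg.2.2.1, phalving hr]⟩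
  have hτ0 : g (r 0) = 0 := pchain_main htot (g (r 0)) hτ hii hhalf hneq
  refine ⟨{m | g m = 0}, ?_, ?_, ?_, ?_, ?_⟩
  · intro hU
    have h1 : g 1 = 0 := by
      have h := Set.mem_univ (1 : M)
      rw [← hU] at h
      exact h
    have h01 : (1 : N) = 0 := by rw [← hg.2.1]; exact h1
    have hz : ∀ a : N, a = 0 := by
      intro a
      apply peq_zero
      have h2 := ple_one a
      rwa [h01] at h2
    exact hneq ((hz (g (r 0))).trans (hz (lneg (g (r 0)))).symm)
  · refine ⟨hg.1, ?_, ?_⟩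
    · intro x hx y hy
      show g (x + y) = 0
      have hx' : g x = 0 := hx
      have hy' : g y = 0 := hy
      rw [hg.2.2.1, hx', hy', add_zero']
    · intro x y hxy hy
      show g x = 0
      have hy' : g y = 0 := hy
      apply peq_zero
      have h := phom_le hg hxy
      rwa [hy'] at h
  · intro x
    ext z
    simp only [Set.mem_setOf_eq]
    constructor
    · rintro ⟨i, hi, rfl⟩
      have hi' : g i = 0 := hi
      have hle : le x (x + i) := ple_add_right x i
      refine ⟨mul (x + i) (lneg x), ?_, (plstar2 hle).symm⟩
      show g (mul (x + i) (lneg x)) = 0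
      rw [phom_mul hg, hg.2.2.2.1, hg.2.2.1, hi', add_zero']
      exact pmul_lneg (g x)
    · rintro ⟨i, hi, rfl⟩
      have hi' : g i = 0 := hi
      have hle : le x (i + x) := ple_add_left i x
      refine ⟨mul (rneg x) (i + x), ?_, (plstar1 hle).symm⟩
      show g (mul (rneg x) (i + x)) = 0
      rw [phom_mul hg, hg.2.2.2.2, hg.2.2.1, hi', zero_add']
      exact pmul_rneg (g x)
  · intro x y hxy
    have h2 : inf (g x) (g y) = 0 := by
      rw [← phom_inf hg]; exact hxy
    rcases htot (g x) (g y) with h | h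
    · left
      show g x = 0
      rw [← pinf_of_le h]; exact h2
    · right
      show g y = 0
      rw [← pinf_of_ge h]; exact h2
  · intro x
    show g (inf x (lneg x)) = 0
    apply peq_zero
    have h1 := phom_le hg (ple_root hr x)
    rwa [hτ0] at h1

end PMV

/-- A representable pseudo MV-algebra `M` (given by a subdirect embedding into a product
of linearly ordered pseudo MV-algebras) with square root `r` is strict iff `M` has no
proper Boolean normal prime ideal (a normal prime ideal `P ≠ M` whose quotient is a
Boolean algebra, equivalently `x ∧ x⁻ ∈ P` for all `x`). -/
theorem strict_iff_no_proper_boolean_normal_prime {M : Type} [PMV M]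
    (ι : Type) (L : ι → Type) [∀ i, PMV (L i)]
    (hlin : ∀ i, ∀ a b : L i, PMV.le a b ∨ PMV.le b a)
    (f : M → ∀ i, L i)
    (hhom : ∀ i, IsPMVHom fun m => f m i)
    (hinj : Function.Injective f)
    (hsur : ∀ i, Function.Surjective fun m => f m i)
    (r : M → M) (hr : PMV.IsSquareRoot r) :
    r 0 = PMV.lneg (r 0) ↔
      ¬ ∃ P : Set M, P ≠ Set.univ ∧ PMV.IsIdeal P ∧ PMV.IsNormal P ∧
        (∀ x y : M, PMV.inf x y ∈ P → x ∈ P ∨ y ∈ P) ∧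
        ∀ x : M, PMV.inf x (PMV.lneg x) ∈ P := by
  constructor
  · intro hstrict
    rintro ⟨P, hPne, hPid, hPnorm, hPprime, hPbool⟩
    have hle : PMV.le (r 0) (PMV.lneg (r 0)) := by
      show PMV.lneg (r 0) + PMV.lneg (r 0) = 1
      nth_rewrite 2 [← hstrict]
      exact PMV.pe2 (r 0)
    have heq : PMV.inf (r 0) (PMV.lneg (r 0)) = r 0 := PMV.pinf_of_le hle
    have hr0 : r 0 ∈ P := by
      have h := hPbool (r 0)
      rwa [heq] at h
    have hsum : r 0 + r 0 ∈ P := hPid.2.1 _ hr0 _ hr0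
    have hone : (1 : M) ∈ P := by
      have h1 : r 0 + r 0 = 1 := by
        nth_rewrite 1 [hstrict]
        exact PMV.pe2 (r 0)
      rwa [h1] at hsum
    apply hPne
    apply Set.eq_univ_of_forall
    intro m
    exact hPid.2.2 m 1 (PMV.ple_one m) hone
  · intro hno
    by_contra hne
    have hex : ∃ i', f (r 0) i' ≠ PMV.lneg (f (r 0) i') := by
      by_contra hall
      push_neg at hall
      apply hne
      apply hinj
      funext i'
      have h1 : f (PMV.lneg (r 0)) i' = PMV.lneg (f (r 0) i') := (hhom i').2.2.2.1 (r 0)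
      rw [h1]
      exact hall i'
    obtain ⟨j, hj⟩ := hex
    exact hno (PMV.pmain_aux (hlin j) (fun m => f m j) (hhom j) (hsur j) r hr hj)
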